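/- arXiv:2311.00582 — 2 statements merged into one kernel-verified Lean document; each statement's English description precedes it below -/
import Mathlib

section
/- If a finite two-player zero-sum matrix game R has a unique Nash equilibrium (p,q) with supports I = supp(p) and J = supp(q), then the block matrix [[R_{IJ}, -1_{|I|}]; [1ᵀ_{|J|}, 0]] is invertible; in particular |I| = |J|. -/
/-
Uniqueness of the equilibrium forces strict complementarity: a pure row `i ∉ I` earns strictly
less than the value `v` against `q`. Otherwise Farkas' lemma, applied to the system
`x ≥ 0, xᵀ (R - v) ≥ 0, x i ≥ 1`, yields either a second optimal strategy of the row player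
that uses `i`, or a second optimal strategy of the column player against which `i` earns
strictly less than `v`.

Let `(y, β)` lie in the kernel of the block matrix and extend `y` by zero outside `J`. Then
`∑ y = 0` and `R_IJ y = β 1`; evaluating `pᵀ R y` by rows gives `β` and by columns gives
`v ∑ y = 0`, so `β = 0`. By strict complementarity `(p, q + ε y)` is still an equilibrium for
all small `ε`, so uniqueness gives `y = 0`. The transposed block matrix is, up to sign, the block
matrix of the dual game `(-Rᵀ, q, p)`, whose equilibrium is unique as well; so both are injective,
which forces `|I| = |J|` and invertibility.

Farkas' lemma comes from separating a point from a finitely generated cone, which is closed by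
the conic Carathéodory theorem.
-/

open Finset

/-- A mixed strategy: nonnegative entries summing to 1. -/
def isSimplex {n : ℕ} (p : Fin n → ℝ) : Prop := (∀ i, 0 ≤ p i) ∧ ∑ i, p i = 1

/-- Expected payoff `pᵀ R q` to player 1. -/
noncomputable def pay {m n : ℕ} (R : Matrix (Fin m) (Fin n) ℝ) (p : Fin m → ℝ)
    (q : Fin n → ℝ) : ℝ :=
  ∑ i, ∑ j, p i * R i j * q j

/-- Payoff of pure row `i` against mixed column strategy `q`:  `e_iᵀ R q`. -/
noncomputable def rowPay {m n : ℕ} (R : Matrix (Fin m) (Fin n) ℝ) (i : Fin m)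
    (q : Fin n → ℝ) : ℝ :=
  ∑ j, R i j * q j

/-- Payoff of mixed row strategy `p` against pure column `j`:  `pᵀ R e_j`. -/
noncomputable def colPay {m n : ℕ} (R : Matrix (Fin m) (Fin n) ℝ) (p : Fin m → ℝ)
    (j : Fin n) : ℝ :=
  ∑ i, p i * R i j

/-- Nash equilibrium of the zero-sum matrix game `R`. -/
def isNash {m n : ℕ} (R : Matrix (Fin m) (Fin n) ℝ) (p : Fin m → ℝ)
    (q : Fin n → ℝ) : Prop :=
  isSimplex p ∧ isSimplex q ∧
    (∀ p', isSimplex p' → pay R p' q ≤ pay R p q) ∧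
    (∀ q', isSimplex q' → pay R p q ≤ pay R p q')

/-- The block matrix `[[R_IJ, -1]; [1ᵀ, 0]]` on the supports of `p` and `q`. -/
noncomputable def blockMat {m n : ℕ} (R : Matrix (Fin m) (Fin n) ℝ) (p : Fin m → ℝ)
    (q : Fin n → ℝ) :
    Matrix ({i : Fin m // 0 < p i} ⊕ Unit) ({j : Fin n // 0 < q j} ⊕ Unit) ℝ :=
  Matrix.of fun a b =>
    match a, b with
    | Sum.inl i, Sum.inl j => R i.1 j.1
    | Sum.inl _, Sum.inr _ => -1
    | Sum.inr _, Sum.inl _ => 1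
    | Sum.inr _, Sum.inr _ => 0

open Matrix Filter Topology

section ConicCaratheodory

variable {𝕜 E ι : Type*} [Field 𝕜] [LinearOrder 𝕜] [IsStrictOrderedRing 𝕜]
  [AddCommGroup E] [Module 𝕜 E] [Fintype ι]

theorem exists_nonneg_sum_smul_eq_of_not_linearIndepOn (a : ι → E) {c : ι → 𝕜} (hc : 0 ≤ c)
    {s : Finset ι} (hcs : ∀ i ∉ s, c i = 0) (hdep : ¬LinearIndepOn 𝕜 a (s : Set ι)) :
    ∃ i ∈ s, ∃ d : ι → 𝕜, 0 ≤ d ∧ d i = 0 ∧ (∀ j ∉ s, d j = 0) ∧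
      ∑ j, d j • a j = ∑ j, c j • a j := by
  classical
  obtain ⟨g, hgs, hga, i, hi, hgi⟩ : ∃ g : ι → 𝕜, (∀ j ∉ s, g j = 0) ∧ ∑ j, g j • a j = 0 ∧
      ∃ i ∈ s, g i ≠ 0 := by
    obtain ⟨g, hg, i, hi, hgi⟩ := not_linearIndepOn_finset_iff.1 hdep
    exact ⟨fun j => if j ∈ s then g j else 0, by simp +contextual,
      by simpa [ite_smul, sum_ite_mem] using hg, i, hi, by simpa [hi]⟩
  obtain ⟨g, hgs, hga, hpos⟩ : ∃ g : ι → 𝕜, (∀ j ∉ s, g j = 0) ∧ ∑ j, g j • a j = 0 ∧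
      ∃ i ∈ s, 0 < g i := by
    rcases hgi.lt_or_gt with h | h
    · exact ⟨-g, by simpa using hgs, by simp [hga], i, hi, by simpa using h⟩
    · exact ⟨g, hgs, hga, i, hi, h⟩
  obtain ⟨i, hi, hmin⟩ := exists_min_image {j ∈ s | 0 < g j} (fun j => c j / g j)
    (by simpa [Finset.Nonempty] using hpos)
  rw [mem_filter] at hi
  set τ := c i / g i
  have hτ : 0 ≤ τ := div_nonneg (hc i) hi.2.le
  refine ⟨i, hi.1, c - τ • g, fun j => ?_, ?_, fun j hj => by simp [hcs j hj, hgs j hj], ?_⟩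
  · rcases le_or_gt (g j) 0 with hgj | hgj
    · have := mul_nonpos_of_nonneg_of_nonpos hτ hgj
      simpa using le_add_of_le_of_nonneg (hc j) (neg_nonneg.2 this)
    · have hj : j ∈ s := by_contra fun hj => hgj.ne' (hgs j hj)
      have := hmin j (mem_filter.2 ⟨hj, hgj⟩)
      simpa using (le_div_iff₀ hgj).1 this
  · simp [τ, div_mul_cancel₀ _ hi.2.ne']
  · simp [sub_smul, sum_sub_distrib, mul_smul, ← smul_sum, hga]

theorem exists_linearIndepOn_nonneg_sum_smul_eq (a : ι → E) {c : ι → 𝕜} (hc : 0 ≤ c)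
    (s : Finset ι) (hcs : ∀ i ∉ s, c i = 0) :
    ∃ t ⊆ s, LinearIndepOn 𝕜 a (t : Set ι) ∧ ∃ d : ι → 𝕜, 0 ≤ d ∧ (∀ i ∉ t, d i = 0) ∧
      ∑ i, d i • a i = ∑ i, c i • a i := by
  classical
  induction s using Finset.strongInduction generalizing c with
  | H s ih =>
    by_cases hind : LinearIndepOn 𝕜 a (s : Set ι)
    · exact ⟨s, subset_rfl, hind, c, hc, hcs, rfl⟩
    obtain ⟨i, hi, d, hd, hdi, hds, hsum⟩ :=
      exists_nonneg_sum_smul_eq_of_not_linearIndepOn a hc hcs hind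
    obtain ⟨t, hts, ht, e, he, het, hesum⟩ := ih (s.erase i) (erase_ssubset hi) hd
      (fun j hj => by
        by_cases hji : j = i
        · rwa [hji]
        · exact hds j fun hjs => hj (mem_erase.2 ⟨hji, hjs⟩))
    exact ⟨t, hts.trans (erase_subset i s), ht, e, he, het, hesum.trans hsum⟩

end ConicCaratheodory

section Farkas

variable {ι κ : Type*} [Fintype ι] [Fintype κ]

theorem PointedCone.isClosed_hull_range {F : Type*} [AddCommGroup F] [Module ℝ F]
    [TopologicalSpace F] [IsTopologicalAddGroup F] [ContinuousSMul ℝ F] [T2Space F] (a : ι → F) :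
    IsClosed (PointedCone.hull ℝ (Set.range a) : Set F) := by
  classical
  have hcover : (PointedCone.hull ℝ (Set.range a) : Set F) =
      ⋃ (t : Finset ι) (_ : LinearIndepOn ℝ a (t : Set ι)),
        Fintype.linearCombination ℝ (fun i : t => a i) '' Set.Ici 0 := by
    ext x
    simp only [SetLike.mem_coe, Set.mem_iUnion, Set.mem_image, Set.mem_Ici]
    constructor
    · intro hx
      obtain ⟨c, rfl⟩ := Submodule.mem_span_range_iff_exists_fun _ |>.1 hx
      obtain ⟨t, -, ht, d, hd, hdt, hsum⟩ := exists_linearIndepOn_nonneg_sum_smul_eq a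
        (c := fun i => (c i : ℝ)) (fun i => (c i).2) univ (by simp)
      refine ⟨t, ht, fun i => d i, fun i => hd i, ?_⟩
      rw [Fintype.linearCombination_apply, sum_coe_sort t (fun i => d i • a i),
        sum_subset (subset_univ t) fun i _ hi => by rw [hdt i hi, zero_smul], hsum]
      rfl
    · rintro ⟨t, -, f, hf, rfl⟩
      rw [Fintype.linearCombination_apply]
      exact Submodule.sum_mem _ fun i _ =>
        PointedCone.smul_mem _ (hf i) (Submodule.subset_span ⟨i, rfl⟩)
  rw [hcover]
  refine isClosed_iUnion_of_finite fun t => isClosed_iUnion_of_finite fun ht => ?_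
  exact (LinearMap.isClosedEmbedding_of_injective (LinearMap.ker_eq_bot.2
    (linearIndependent_iff_injective_fintypeLinearCombination.1 ht))).isClosedMap _ isClosed_Ici

theorem Matrix.exists_nonneg_le_vecMul_or_exists_nonneg_mulVec_nonpos (A : Matrix ι κ ℝ)
    (b : κ → ℝ) :
    (∃ x, 0 ≤ x ∧ b ≤ x ᵥ* A) ∨ ∃ y, 0 ≤ y ∧ A *ᵥ y ≤ 0 ∧ 0 < b ⬝ᵥ y := by
  classical
  -- `b` lies in the cone spanned by these iff `b = x ᵥ* A - s` for some `x, s ≥ 0`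
  let a : ι ⊕ κ → κ → ℝ := Sum.elim (fun i => A i) (fun k => -Pi.single k 1)
  let C : ProperCone ℝ (κ → ℝ) :=
    ⟨PointedCone.hull ℝ (Set.range a), PointedCone.isClosed_hull_range a⟩
  by_cases hb : b ∈ C
  · left
    obtain ⟨c, hc⟩ := Submodule.mem_span_range_iff_exists_fun _ |>.1 hb
    refine ⟨fun i => c (Sum.inl i), fun i => (c _).2, fun k => ?_⟩
    have hk := congrFun hc k
    simp [a, Fintype.sum_sum_type, Pi.single_apply, ← Nonneg.coe_smul] at hk
    simp only [vecMul, dotProduct]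
    linarith [(c (Sum.inr k)).2]
  · right
    obtain ⟨f, hf, hfb⟩ := C.hyperplane_separation_point hb
    have hfa : ∀ j, 0 ≤ f (a j) := fun j => hf _ (Submodule.subset_span ⟨j, rfl⟩)
    have hrepr : ∀ x, f x = ∑ k, x k * f (Pi.single k 1) := fun x => by
      conv_lhs => rw [← univ_sum_single x, map_sum]
      refine sum_congr rfl fun k _ => ?_
      rw [← smul_eq_mul, ← map_smul, ← Pi.single_smul', smul_eq_mul, mul_one]
    refine ⟨fun k => -f (Pi.single k 1), fun k => ?_, fun i => ?_, ?_⟩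
    · simpa [a] using hfa (Sum.inr k)
    · simpa [a, mulVec, dotProduct, hrepr (A i)] using hfa (Sum.inl i)
    · simpa [dotProduct, hrepr b] using hfb

end Farkas

section Simplex

variable {k : ℕ}

theorem isSimplex_single (i : Fin k) : isSimplex (Pi.single i 1 : Fin k → ℝ) :=
  ⟨fun j => by by_cases h : j = i <;> simp [h], by simp⟩

theorem isSimplex_inv_sum_smul {x : Fin k → ℝ} (hx : 0 ≤ x) (hs : 0 < ∑ i, x i) :
    isSimplex ((∑ i, x i)⁻¹ • x) :=
  ⟨fun i => smul_nonneg (inv_nonneg.2 hs.le) (hx i), by simp [← mul_sum, hs.ne']⟩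

theorem isSimplex.sum_mul_le {c x : Fin k → ℝ} {v : ℝ} (hc : isSimplex c)
    (hx : ∀ i, x i ≤ v) : ∑ i, c i * x i ≤ v :=
  calc ∑ i, c i * x i ≤ ∑ i, c i * v :=
        sum_le_sum fun i _ => mul_le_mul_of_nonneg_left (hx i) (hc.1 i)
    _ = v := by rw [← sum_mul, hc.2, one_mul]

theorem isSimplex.le_sum_mul {c x : Fin k → ℝ} {v : ℝ} (hc : isSimplex c)
    (hx : ∀ i, v ≤ x i) : v ≤ ∑ i, x i * c i :=
  calc v = ∑ i, v * c i := by rw [← mul_sum, hc.2, mul_one]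
    _ ≤ ∑ i, x i * c i := sum_le_sum fun i _ => mul_le_mul_of_nonneg_right (hx i) (hc.1 i)

end Simplex

section Payoffs

variable {m n : ℕ} (R : Matrix (Fin m) (Fin n) ℝ)

theorem pay_eq_sum_rowPay (p : Fin m → ℝ) (q : Fin n → ℝ) :
    pay R p q = ∑ i, p i * rowPay R i q := by
  simp [pay, rowPay, mul_sum, mul_assoc]

theorem pay_eq_sum_colPay (p : Fin m → ℝ) (q : Fin n → ℝ) :
    pay R p q = ∑ j, colPay R p j * q j := by
  rw [pay, sum_comm]
  simp [colPay, sum_mul]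

theorem rowPay_smul (i : Fin m) (c : ℝ) (q : Fin n → ℝ) :
    rowPay R i (c • q) = c * rowPay R i q := by
  simp [rowPay, mul_sum, mul_left_comm]

theorem rowPay_add_smul (i : Fin m) (q y : Fin n → ℝ) (ε : ℝ) :
    rowPay R i (q + ε • y) = rowPay R i q + ε * rowPay R i y := by
  simp [rowPay, mul_add, sum_add_distrib, mul_sum, mul_left_comm]

theorem colPay_smul (p : Fin m → ℝ) (c : ℝ) (j : Fin n) :
    colPay R (c • p) j = c * colPay R p j := by
  simp [colPay, mul_sum, mul_assoc]

theorem rowPay_neg_transpose (p : Fin m → ℝ) (j : Fin n) :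
    rowPay (-Rᵀ) j p = -colPay R p j := by
  simp [rowPay, colPay, mul_comm]

theorem pay_neg_transpose (p : Fin m → ℝ) (q : Fin n → ℝ) :
    pay (-Rᵀ) q p = -pay R p q := by
  rw [pay_eq_sum_rowPay, pay_eq_sum_colPay]
  simp [rowPay_neg_transpose, mul_comm]

end Payoffs

theorem isNash_neg_transpose_iff {m n : ℕ} {R : Matrix (Fin m) (Fin n) ℝ} {p : Fin m → ℝ}
    {q : Fin n → ℝ} :
    isNash (-Rᵀ) q p ↔ isNash R p q := by
  simp only [isNash, pay_neg_transpose, neg_le_neg_iff]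
  tauto

namespace isNash

variable {m n : ℕ} {R : Matrix (Fin m) (Fin n) ℝ} {p : Fin m → ℝ} {q : Fin n → ℝ}

theorem rowPay_le (h : isNash R p q) (i : Fin m) : rowPay R i q ≤ pay R p q := by
  simpa [pay_eq_sum_rowPay, Pi.single_apply, ite_mul] using h.2.2.1 _ (isSimplex_single i)

theorem rowPay_eq_of_pos (h : isNash R p q) {i : Fin m} (hi : 0 < p i) :
    rowPay R i q = pay R p q := by
  have hsum : ∑ i, p i * (pay R p q - rowPay R i q) = 0 := by
    simp [mul_sub, sum_sub_distrib, ← sum_mul, h.1.2, ← pay_eq_sum_rowPay]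
  have := (sum_eq_zero_iff_of_nonneg fun i _ =>
    mul_nonneg (h.1.1 i) (sub_nonneg.2 (h.rowPay_le i))).1 hsum i (mem_univ i)
  rcases mul_eq_zero.1 this with h0 | h0
  · exact absurd h0 hi.ne'
  · linarith

theorem le_colPay (h : isNash R p q) (j : Fin n) : pay R p q ≤ colPay R p j := by
  simpa [rowPay_neg_transpose, pay_neg_transpose] using
    (isNash_neg_transpose_iff.2 h).rowPay_le j

theorem colPay_eq_of_pos (h : isNash R p q) {j : Fin n} (hj : 0 < q j) :
    colPay R p j = pay R p q := by
  simpa [rowPay_neg_transpose, pay_neg_transpose] using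
    (isNash_neg_transpose_iff.2 h).rowPay_eq_of_pos hj

theorem of_rowPay_le (h : isNash R p q) {q' : Fin n → ℝ} (hq' : isSimplex q')
    (hle : ∀ i, rowPay R i q' ≤ pay R p q) : isNash R p q' := by
  have hv : pay R p q' = pay R p q := le_antisymm
    (by rw [pay_eq_sum_rowPay]; exact h.1.sum_mul_le hle)
    (by rw [pay_eq_sum_colPay R p q']; exact hq'.le_sum_mul h.le_colPay)
  refine ⟨h.1, hq', fun p'' hp'' => ?_, fun q'' hq'' => ?_⟩
  · rw [hv, pay_eq_sum_rowPay]
    exact hp''.sum_mul_le hle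
  · rw [hv, pay_eq_sum_colPay R p q'']
    exact hq''.le_sum_mul h.le_colPay

theorem of_le_colPay (h : isNash R p q) {p' : Fin m → ℝ} (hp' : isSimplex p')
    (hle : ∀ j, pay R p q ≤ colPay R p' j) : isNash R p' q :=
  isNash_neg_transpose_iff.1 <| (isNash_neg_transpose_iff.2 h).of_rowPay_le hp' <| by
    simpa [rowPay_neg_transpose, pay_neg_transpose] using hle

theorem of_le_colPay_mul_sum (h : isNash R p q) {x : Fin m → ℝ} (hx : 0 ≤ x)
    (hs : 0 < ∑ i, x i) (hle : ∀ j, pay R p q * ∑ i, x i ≤ colPay R x j) :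
    isNash R ((∑ i, x i)⁻¹ • x) q :=
  h.of_le_colPay (isSimplex_inv_sum_smul hx hs) fun j => by
    rw [colPay_smul, ← div_eq_inv_mul, le_div_iff₀ hs]
    exact hle j

theorem of_rowPay_le_mul_sum (h : isNash R p q) {w : Fin n → ℝ} (hw : 0 ≤ w)
    (hs : 0 < ∑ j, w j) (hle : ∀ i, rowPay R i w ≤ pay R p q * ∑ j, w j) :
    isNash R p ((∑ j, w j)⁻¹ • w) :=
  h.of_rowPay_le (isSimplex_inv_sum_smul hw hs) fun i => by
    rw [rowPay_smul, ← div_eq_inv_mul, div_le_iff₀ hs]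
    exact hle i

theorem rowPay_lt_of_unique (h : isNash R p q)
    (huniq : ∀ p' q', isNash R p' q' → p' = p ∧ q' = q) {i₀ : Fin m} (hi₀ : p i₀ = 0) :
    rowPay R i₀ q < pay R p q := by
  by_contra! hge
  set v := pay R p q
  let A : Matrix (Fin m) (Fin n ⊕ Unit) ℝ :=
    of fun i => Sum.elim (fun j => R i j - v) fun _ => if i = i₀ then 1 else 0
  rcases A.exists_nonneg_le_vecMul_or_exists_nonneg_mulVec_nonpos (Sum.elim 0 1) with
    ⟨x, hx, hxA⟩ | ⟨y, hy, hAy, hby⟩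
  · have hcol (j : Fin n) : v * ∑ i, x i ≤ colPay R x j := by
      have := hxA (Sum.inl j)
      simp [A, vecMul, dotProduct, mul_sub, sum_sub_distrib, ← sum_mul] at this
      simpa [colPay, mul_comm] using this
    have hxi₀ : 1 ≤ x i₀ := by simpa [A, vecMul, dotProduct] using hxA (Sum.inr ())
    have hs : 0 < ∑ i, x i := by linarith [single_le_sum (fun i _ => hx i) (mem_univ i₀)]
    have hp := congrFun (huniq _ q (h.of_le_colPay_mul_sum hx hs hcol)).1 i₀
    have : 0 < (∑ i, x i)⁻¹ * x i₀ := mul_pos (inv_pos.2 hs) (by linarith)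
    rw [Pi.smul_apply, smul_eq_mul, hi₀] at hp
    linarith
  · set w : Fin n → ℝ := fun j => y (Sum.inl j)
    have ht : 0 < y (Sum.inr ()) := by simpa [dotProduct] using hby
    have hAy' (i : Fin m) :
        rowPay R i w + (if i = i₀ then y (Sum.inr ()) else 0) ≤ v * ∑ j, w j := by
      have := hAy i
      simp [A, mulVec, dotProduct, sub_mul, sum_sub_distrib, ← mul_sum] at this
      simp only [rowPay, w]
      split_ifs at this ⊢ <;> linarith
    have hrow (i : Fin m) : rowPay R i w ≤ v * ∑ j, w j := by
      have := hAy' i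
      split_ifs at this <;> linarith
    have hlt : rowPay R i₀ w < v * ∑ j, w j := by
      have := hAy' i₀
      rw [if_pos rfl] at this
      linarith
    have hs : 0 < ∑ j, w j := by
      by_contra! hs
      have hw : w = 0 := (Fintype.sum_eq_zero_iff_of_nonneg (f := w) fun j => hy _).1
        (le_antisymm hs (sum_nonneg fun j _ => hy _))
      simp [hw, rowPay] at hlt
    have hq := (huniq p _ (h.of_rowPay_le_mul_sum (fun j => hy _) hs hrow)).2
    rw [← hq, rowPay_smul, ← div_eq_inv_mul, le_div_iff₀ hs] at hge
    linarith

theorem eq_zero_of_rowPay_eq (h : isNash R p q) {y : Fin n → ℝ} {β : ℝ}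
    (hy : ∀ j, q j = 0 → y j = 0) (hsum : ∑ j, y j = 0)
    (hrow : ∀ i, 0 < p i → rowPay R i y = β) : β = 0 := by
  have hβ : pay R p y = β := by
    rw [pay_eq_sum_rowPay]
    calc ∑ i, p i * rowPay R i y = ∑ i, p i * β := sum_congr rfl fun i _ => by
          rcases (h.1.1 i).eq_or_lt with hi | hi
          · simp [← hi]
          · rw [hrow i hi]
      _ = β := by rw [← sum_mul, h.1.2, one_mul]
  have h0 : pay R p y = 0 := by
    rw [pay_eq_sum_colPay]
    calc ∑ j, colPay R p j * y j = ∑ j, pay R p q * y j := sum_congr rfl fun j _ => by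
          rcases (h.2.1.1 j).eq_or_lt with hj | hj
          · simp [hy j hj.symm]
          · rw [h.colPay_eq_of_pos hj]
      _ = 0 := by rw [← mul_sum, hsum, mul_zero]
  rw [← hβ, h0]

theorem eq_zero_of_unique (h : isNash R p q)
    (huniq : ∀ p' q', isNash R p' q' → p' = p ∧ q' = q) {y : Fin n → ℝ}
    (hy : ∀ j, q j = 0 → y j = 0) (hsum : ∑ j, y j = 0)
    (hrow : ∀ i, 0 < p i → rowPay R i y = 0) : y = 0 := by
  have hlim (a b : ℝ) : Tendsto (fun ε => a + ε * b) (𝓝 0) (𝓝 a) :=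
    Continuous.tendsto' (by fun_prop) 0 a (by simp)
  have hnonneg : ∀ᶠ ε in 𝓝 (0 : ℝ), ∀ j, 0 ≤ q j + ε * y j := eventually_all.2 fun j => by
    rcases (h.2.1.1 j).eq_or_lt with hj | hj
    · simp [← hj, hy j hj.symm]
    · exact ((hlim _ _).eventually (lt_mem_nhds hj)).mono fun _ => le_of_lt
  have hrows : ∀ᶠ ε in 𝓝 (0 : ℝ), ∀ i, rowPay R i (q + ε • y) ≤ pay R p q :=
    eventually_all.2 fun i => by
      simp only [rowPay_add_smul]
      rcases (h.1.1 i).eq_or_lt with hi | hi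
      · exact ((hlim _ _).eventually (gt_mem_nhds (h.rowPay_lt_of_unique huniq hi.symm))).mono
          fun _ => le_of_lt
      · simp [hrow i hi, h.rowPay_eq_of_pos hi]
  obtain ⟨ε, ⟨hε, hεrow⟩, hε0⟩ := ((hnonneg.and hrows).filter_mono nhdsWithin_le_nhds).and
    (self_mem_nhdsWithin : ∀ᶠ ε in 𝓝[≠] (0 : ℝ), ε ≠ 0) |>.exists
  have hq := (huniq p _ (h.of_rowPay_le
    ⟨hε, by simp [sum_add_distrib, ← mul_sum, hsum, h.2.1.2]⟩ hεrow)).2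
  exact (smul_eq_zero.1 (add_eq_left.1 hq)).resolve_left hε0

end isNash

theorem blockMat_transpose {m n : ℕ} (R : Matrix (Fin m) (Fin n) ℝ) (p : Fin m → ℝ)
    (q : Fin n → ℝ) : (blockMat R p q)ᵀ = -blockMat (-Rᵀ) q p := by
  ext (a | a) (b | b) <;> simp [blockMat]

theorem blockMat_mulVecLin_injective {m n : ℕ} {R : Matrix (Fin m) (Fin n) ℝ}
    {p : Fin m → ℝ} {q : Fin n → ℝ} (h : isNash R p q)
    (huniq : ∀ p' q', isNash R p' q' → p' = p ∧ q' = q) :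
    Function.Injective (blockMat R p q).mulVecLin := by
  rw [← LinearMap.ker_eq_bot, LinearMap.ker_eq_bot']
  intro x hx
  set y : Fin n → ℝ := fun j => if hj : 0 < q j then x (Sum.inl ⟨j, hj⟩) else 0
  have hsum_y (f : Fin n → ℝ) :
      ∑ j, f j * y j = ∑ j : {j // 0 < q j}, f j * x (Sum.inl j) := by
    have hpos (j : {j // 0 < q j}) : f j * y j = f j * x (Sum.inl j) := by simp [y, j.2]
    have hzero (j : {j // ¬0 < q j}) : f j * y j = 0 := by simp [y, j.2]
    rw [← Fintype.sum_subtype_add_sum_subtype (fun j => 0 < q j), Fintype.sum_congr _ _ hpos,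
      Fintype.sum_congr _ _ hzero, sum_const_zero, add_zero]
  have hrow : ∀ i, 0 < p i → rowPay R i y = x (Sum.inr ()) := fun i hi => by
    have := congrFun hx (Sum.inl ⟨i, hi⟩)
    simp [blockMat, mulVec, dotProduct, Fintype.sum_sum_type] at this
    rw [rowPay, hsum_y]
    linarith
  have hsum : ∑ j, y j = 0 := by
    have := congrFun hx (Sum.inr ())
    simp [blockMat, mulVec, dotProduct, Fintype.sum_sum_type] at this
    simpa [this] using hsum_y 1
  have hy : ∀ j, q j = 0 → y j = 0 := fun j hj => by simp [y, hj]
  have hβ := h.eq_zero_of_rowPay_eq hy hsum hrow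
  have hy0 := h.eq_zero_of_unique huniq hy hsum (by simpa [hβ] using hrow)
  ext (j | _)
  · simpa [y, j.2] using congrFun hy0 j
  · exact hβ

theorem Matrix.card_le_card_of_mulVecLin_injective {K ι κ : Type*} [Field K] [Fintype ι]
    [Fintype κ] {M : Matrix ι κ K} (hM : Function.Injective M.mulVecLin) :
    Fintype.card κ ≤ Fintype.card ι := by
  simpa using LinearMap.finrank_le_finrank_of_injective hM

/-- If `R` has a unique Nash equilibrium `(p,q)`, then the block matrix
`[[R_IJ, -1]; [1ᵀ, 0]]` is invertible; in particular `|I| = |J|`. -/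
theorem stmt3 {m n : ℕ} (R : Matrix (Fin m) (Fin n) ℝ)
    (p : Fin m → ℝ) (q : Fin n → ℝ)
    (hNE : isNash R p q)
    (huniq : ∀ p' q', isNash R p' q' → p' = p ∧ q' = q) :
    Function.Bijective (Matrix.mulVecLin (blockMat R p q)) ∧
      Fintype.card {i : Fin m // 0 < p i} = Fintype.card {j : Fin n // 0 < q j} := by
  have hdual : ∀ q' p', isNash (-Rᵀ) q' p' → q' = q ∧ p' = p := fun q' p' h =>
    (huniq p' q' (isNash_neg_transpose_iff.1 h)).symm
  have hinj := blockMat_mulVecLin_injective hNE huniq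
  have hinjT : Function.Injective (blockMat R p q)ᵀ.mulVecLin := by
    rw [blockMat_transpose]
    intro x y hxy
    exact blockMat_mulVecLin_injective (isNash_neg_transpose_iff.2 hNE) hdual
      (by simpa [neg_mulVec] using hxy)
  have hcard : Fintype.card ({i : Fin m // 0 < p i} ⊕ Unit) =
      Fintype.card ({j : Fin n // 0 < q j} ⊕ Unit) :=
    le_antisymm (card_le_card_of_mulVecLin_injective hinjT)
      (card_le_card_of_mulVecLin_injective hinj)
  refine ⟨⟨hinj, ?_⟩, by simpa using hcard⟩
  exact (LinearMap.injective_iff_surjective_of_finrank_eq_finrank (by simp [hcard])).1 hinj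
end

section
/- Consider a finite-horizon two-player zero-sum Markov game with horizon H where every stage-game Q-matrix Q_h(s) (defined via the Bellman recursion from rewards R and transitions P) has a unique Nash equilibrium (p_h(s), q_h(s)) with value v_h(s). If the rewards are defined as R_h(s) = δ·R^{eRPS(p_h(s), q_h(s))} + v*/H for all h, s (with v* ∈ ℝ, δ > 0), then the stage value satisfies v_h(s) = ((H−h+1)/H)·v* for every h ∈ [H], s ∈ S, and the overall game value Σ_s P₀(s) v₁(s) equals v*. -/
open Finset

/-- Extension of `p : Fin m → ℝ` to `ℕ` by zero. -/
noncomputable def pext {m : ℕ} (p : Fin m → ℝ) (i : ℕ) : ℝ :=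
  if h : i < m then p ⟨i, h⟩ else 0

/-- The normalizing constant `c` of the extended Rock-Paper-Scissors game. -/
noncomputable def eRPSc {m n : ℕ} (k : ℕ) (p : Fin m → ℝ) (q : Fin n → ℝ) : ℝ :=
  ⨅ i : Fin k, min (pext p i * pext q (((i : ℕ) + 1) % k))
    (pext p i * pext q (((i : ℕ) + 2) % k))

/-- The extended Rock-Paper-Scissors payoff matrix for target `(p, q)` with common
support `{0, …, k-1}`. -/
noncomputable def eRPS {m n : ℕ} (k : ℕ) (p : Fin m → ℝ) (q : Fin n → ℝ) :
    Matrix (Fin m) (Fin n) ℝ :=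
  Matrix.of fun i j =>
    if (i : ℕ) < k ∧ (j : ℕ) < k then
      if 1 < k ∧ (j : ℕ) = ((i : ℕ) + 1) % k then -(eRPSc k p q) / (p i * q j)
      else if 1 < k ∧ (j : ℕ) = ((i : ℕ) + 2) % k then eRPSc k p q / (p i * q j)
      else 0
    else if (i : ℕ) < k then 1
    else if (j : ℕ) < k then -1
    else 0

/-!
The reward matrix at `(h, s)` is `δ·eRPS(p_h(s), q_h(s))` plus the constant `v*/H`, and by
backward induction the continuation term adds the constant `((H - h - 1)/H)·v*` (the transition
rows are probability vectors). The payoff at `(p, q)` of such a matrix is that constant, because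
the extended Rock-Paper-Scissors game pays `0` against its own target: in row `i` of the common
support the only nonzero terms are `-c` at column `i + 1` and `+c` at column `i + 2` (mod `k`).
-/

lemma pay_mul_add_const {m n : ℕ} (M : Matrix (Fin m) (Fin n) ℝ) (a C : ℝ)
    {p : Fin m → ℝ} {q : Fin n → ℝ} (hp : isSimplex p) (hq : isSimplex q) :
    pay (Matrix.of fun i j => a * M i j + C) p q = a * pay M p q + C := by
  calc pay (Matrix.of fun i j => a * M i j + C) p q
      = ∑ i, ∑ j, (a * (p i * M i j * q j) + C * (p i * q j)) := by
        refine sum_congr rfl fun i _ => sum_congr rfl fun j _ => ?_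
        simp only [Matrix.of_apply]; ring
    _ = a * pay M p q + C * ∑ i, ∑ j, p i * q j := by simp only [pay, sum_add_distrib, mul_sum]
    _ = a * pay M p q + C := by rw [← sum_mul_sum, hp.2, hq.2, mul_one, mul_one]

lemma eq_zero_of_not_lt_of_pos_iff {m k : ℕ} {p : Fin m → ℝ} (hp0 : ∀ i, 0 ≤ p i)
    (hps : ∀ i : Fin m, 0 < p i ↔ (i : ℕ) < k) {i : Fin m} (hi : ¬ (i : ℕ) < k) : p i = 0 :=
  le_antisymm (not_lt.1 (mt (hps i).1 hi)) (hp0 i)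

lemma pext_nonneg {m : ℕ} {p : Fin m → ℝ} (hp0 : ∀ i, 0 ≤ p i) (t : ℕ) : 0 ≤ pext p t := by
  unfold pext
  split
  exacts [hp0 _, le_rfl]

lemma Fin.sum_ite_val_eq {n : ℕ} (a : ℕ) :
    ∑ j : Fin n, (if (j : ℕ) = a then (1 : ℝ) else 0) = if a < n then 1 else 0 := by
  split_ifs with ha
  · simp_rw [← Fin.ext_iff (b := ⟨a, ha⟩), sum_ite_eq', mem_univ, if_true]
  · exact sum_eq_zero fun j _ => if_neg fun h : (j : ℕ) = a => ha (h ▸ j.isLt)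

lemma add_one_mod_ne_add_two_mod {k : ℕ} (hk : 1 < k) (i : ℕ) : (i + 1) % k ≠ (i + 2) % k := by
  intro h
  have hdvd : k ∣ 2 - 1 := (Nat.modEq_iff_dvd' (by norm_num)).1 (Nat.ModEq.add_left_cancel' i h)
  exact absurd (Nat.le_of_dvd one_pos hdvd) (not_le.2 hk)

section eRPS

variable {m n k : ℕ} {p : Fin m → ℝ} {q : Fin n → ℝ}

lemma eRPSc_nonneg (hp0 : ∀ i, 0 ≤ p i) (hq0 : ∀ j, 0 ≤ q j) : 0 ≤ eRPSc k p q :=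
  Real.iInf_nonneg fun _ =>
    le_min (mul_nonneg (pext_nonneg hp0 _) (pext_nonneg hq0 _))
      (mul_nonneg (pext_nonneg hp0 _) (pext_nonneg hq0 _))

lemma eRPSc_eq_zero_of_lt (hp0 : ∀ i, 0 ≤ p i) (hq0 : ∀ j, 0 ≤ q j) (hk : 1 < k) (hnk : n < k) :
    eRPSc k p q = 0 := by
  refine le_antisymm ?_ (eRPSc_nonneg hp0 hq0)
  have hlast : ((k - 2 + 1) % k) = k - 1 := by
    rw [show k - 2 + 1 = k - 1 by omega, Nat.mod_eq_of_lt (by omega)]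
  calc eRPSc k p q
      ≤ min (pext p (k - 2) * pext q ((k - 2 + 1) % k))
          (pext p (k - 2) * pext q ((k - 2 + 2) % k)) :=
        ciInf_le (Set.finite_range _).bddBelow (⟨k - 2, by omega⟩ : Fin k)
    _ ≤ pext p (k - 2) * pext q ((k - 2 + 1) % k) := min_le_left _ _
    _ = 0 := by rw [hlast, show pext q (k - 1) = 0 from dif_neg (by omega), mul_zero]

lemma mul_eRPS_mul_of_lt (hq0 : ∀ j, 0 ≤ q j) (hqs : ∀ j : Fin n, 0 < q j ↔ (j : ℕ) < k)
    (hk : 1 < k) {i : Fin m} (hpi : 0 < p i) (hik : (i : ℕ) < k) (j : Fin n) :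
    p i * eRPS k p q i j * q j = eRPSc k p q *
      ((if (j : ℕ) = ((i : ℕ) + 2) % k then 1 else 0) -
        (if (j : ℕ) = ((i : ℕ) + 1) % k then 1 else 0)) := by
  by_cases hjk : (j : ℕ) < k
  · have hqj : 0 < q j := (hqs j).2 hjk
    have hne := add_one_mod_ne_add_two_mod hk i
    simp only [eRPS, Matrix.of_apply, hik, hjk, hk, true_and, and_self, if_true]
    split_ifs with h1 h2 h2
    · omega
    · field_simp; ring
    · field_simp; ring
    · simp
  · have hmod : ∀ l, (j : ℕ) ≠ ((i : ℕ) + l) % k := fun l h => hjk (h ▸ Nat.mod_lt _ (by omega))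
    rw [eq_zero_of_not_lt_of_pos_iff hq0 hqs hjk, if_neg (hmod 2), if_neg (hmod 1)]
    ring

lemma pay_eRPS_self (hp0 : ∀ i, 0 ≤ p i) (hq0 : ∀ j, 0 ≤ q j)
    (hps : ∀ i : Fin m, 0 < p i ↔ (i : ℕ) < k) (hqs : ∀ j : Fin n, 0 < q j ↔ (j : ℕ) < k) :
    pay (eRPS k p q) p q = 0 := by
  refine sum_eq_zero fun i _ => ?_
  by_cases hik : (i : ℕ) < k
  swap
  · simp [eq_zero_of_not_lt_of_pos_iff hp0 hps hik]
  by_cases hk : 1 < k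
  · simp_rw [mul_eRPS_mul_of_lt hq0 hqs hk ((hps i).2 hik) hik, ← mul_sum, sum_sub_distrib,
      Fin.sum_ite_val_eq]
    rcases le_or_gt k n with hkn | hnk
    · rw [if_pos ((Nat.mod_lt _ (by omega)).trans_le hkn),
        if_pos ((Nat.mod_lt _ (by omega)).trans_le hkn), sub_self, mul_zero]
    · rw [eRPSc_eq_zero_of_lt hp0 hq0 hk hnk, zero_mul]
  · refine sum_eq_zero fun j _ => ?_
    by_cases hjk : (j : ℕ) < k
    · simp [eRPS, hik, hjk, hk]
    · simp [eq_zero_of_not_lt_of_pos_iff hq0 hqs hjk]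

lemma pay_mul_eRPS_add_const (δ C : ℝ) (hp : isSimplex p) (hq : isSimplex q)
    (hps : ∀ i : Fin m, 0 < p i ↔ (i : ℕ) < k) (hqs : ∀ j : Fin n, 0 < q j ↔ (j : ℕ) < k) :
    pay (Matrix.of fun i j => δ * eRPS k p q i j + C) p q = C := by
  rw [pay_mul_add_const _ _ _ hp hq, pay_eRPS_self hp.1 hq.1 hps hqs, mul_zero, zero_add]

end eRPS

theorem stmt18_general {S : Type*} [Fintype S] {m n H : ℕ} (hH : 1 ≤ H)
    (P0 : S → ℝ) (hP0 : (∀ s, 0 ≤ P0 s) ∧ ∑ s, P0 s = 1)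
    (P : ℕ → S → S → Matrix (Fin m) (Fin n) ℝ)
    (hP : ∀ h < H, ∀ s, ∀ (i : Fin m) (j : Fin n),
      (∀ s', 0 ≤ P h s s' i j) ∧ ∑ s', P h s s' i j = 1)
    (R Q : ℕ → S → Matrix (Fin m) (Fin n) ℝ)
    (v : ℕ → S → ℝ)
    (p : ℕ → S → Fin m → ℝ) (q : ℕ → S → Fin n → ℝ)
    (k : ℕ → S → ℕ)
    (vstar δ : ℝ)
    (hsimp : ∀ h < H, ∀ s, isSimplex (p h s) ∧ isSimplex (q h s))
    (hsupp : ∀ h < H, ∀ s, (∀ i : Fin m, 0 < p h s i ↔ (i : ℕ) < k h s) ∧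
      (∀ j : Fin n, 0 < q h s j ↔ (j : ℕ) < k h s))
    (hvH : ∀ s, v H s = 0)
    (hQ : ∀ h < H, ∀ s, Q h s =
      Matrix.of fun i j => R h s i j + ∑ s', P h s s' i j * v (h + 1) s')
    (hval : ∀ h < H, ∀ s, v h s = pay (Q h s) (p h s) (q h s))
    (hR : ∀ h < H, ∀ s, R h s =
      Matrix.of fun i j => δ * eRPS (k h s) (p h s) (q h s) i j + vstar / H) :
    (∀ h < H, ∀ s, v h s = (((H : ℝ) - h) / H) * vstar) ∧
      ∑ s, P0 s * v 0 s = vstar := by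
  have hHpos : (0 : ℝ) < H := by exact_mod_cast hH
  have step : ∀ h < H, ∀ c : ℝ, (∀ s, v (h + 1) s = c) → ∀ s, v h s = vstar / H + c := by
    intro h hh c hc s
    obtain ⟨hp, hq⟩ := hsimp h hh s
    have hQc : Q h s = Matrix.of fun i j =>
        δ * eRPS (k h s) (p h s) (q h s) i j + (vstar / H + c) := by
      ext i j
      simp only [hQ h hh s, hR h hh s, Matrix.of_apply, hc, ← sum_mul, (hP h hh s i j).2]
      ring
    rw [hval h hh s, hQc, pay_mul_eRPS_add_const _ _ hp hq (hsupp h hh s).1 (hsupp h hh s).2]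
  have hv : ∀ h ≤ H, ∀ s, v h s = (((H : ℝ) - h) / H) * vstar := fun h hh =>
    Nat.decreasingInduction (motive := fun h _ => ∀ s, v h s = (((H : ℝ) - h) / H) * vstar)
      (fun h hh ih s => by
        rw [step h hh _ ih]
        push_cast
        field_simp
        ring)
      (by simpa using hvH) hh
  refine ⟨fun h hh => hv h hh.le, ?_⟩
  simp_rw [hv 0 (Nat.zero_le H), Nat.cast_zero, sub_zero, div_self hHpos.ne', one_mul, ← sum_mul,
    hP0.2, one_mul]

/-- In a finite-horizon zero-sum Markov game whose stage rewards are
`δ·R^{eRPS(p_h(s), q_h(s))} + v*/H`, the stage values are `v_h(s) = ((H-h)/H)·v*`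
(0-indexed periods) and the overall game value is `v*`. -/
theorem stmt18 {S : Type*} [Fintype S] {m n H : ℕ} (hH : 1 ≤ H)
    (P0 : S → ℝ) (hP0 : (∀ s, 0 ≤ P0 s) ∧ ∑ s, P0 s = 1)
    (P : ℕ → S → S → Matrix (Fin m) (Fin n) ℝ)
    (hP : ∀ h < H, ∀ s, ∀ (i : Fin m) (j : Fin n),
      (∀ s', 0 ≤ P h s s' i j) ∧ ∑ s', P h s s' i j = 1)
    (R Q : ℕ → S → Matrix (Fin m) (Fin n) ℝ)
    (v : ℕ → S → ℝ)
    (p : ℕ → S → Fin m → ℝ) (q : ℕ → S → Fin n → ℝ)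
    (k : ℕ → S → ℕ)
    (vstar δ : ℝ) (hδ : 0 < δ)
    (hsimp : ∀ h < H, ∀ s, isSimplex (p h s) ∧ isSimplex (q h s))
    (hsupp : ∀ h < H, ∀ s, (∀ i : Fin m, 0 < p h s i ↔ (i : ℕ) < k h s) ∧
      (∀ j : Fin n, 0 < q h s j ↔ (j : ℕ) < k h s))
    (hvH : ∀ s, v H s = 0)
    (hQ : ∀ h < H, ∀ s, Q h s =
      Matrix.of fun i j => R h s i j + ∑ s', P h s s' i j * v (h + 1) s')
    (hNash : ∀ h < H, ∀ s, isNash (Q h s) (p h s) (q h s) ∧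
      ∀ p' q', isNash (Q h s) p' q' → p' = p h s ∧ q' = q h s)
    (hval : ∀ h < H, ∀ s, v h s = pay (Q h s) (p h s) (q h s))
    (hR : ∀ h < H, ∀ s, R h s =
      Matrix.of fun i j => δ * eRPS (k h s) (p h s) (q h s) i j + vstar / H) :
    (∀ h < H, ∀ s, v h s = (((H : ℝ) - h) / H) * vstar) ∧
      ∑ s, P0 s * v 0 s = vstar :=
  stmt18_general hH P0 hP0 P hP R Q v p q k vstar δ hsimp hsupp hvH hQ hval hR
end
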